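/- The Σ-derivative of the log tilted partition function: for every probability measure P_X on ℝ, every Σ > 0 and T ∈ ℝ, the function Σ ↦ log Ẑ(Σ,T) is differentiable and 2Σ² · (∂/∂Σ) log Ẑ(Σ,T) = f_c(Σ,T) + ( f_a(Σ,T) − T )². (This is the identity used to show that stationarity of the Bethe free entropy in Σ forces the AMP variance update c = f_c(Σ,T).) -/

import Mathlib

open MeasureTheory

/-- The tilted partition function `Ẑ(Σ,T) = ∫ e^{-(x-T)²/(2Σ)} dP_X(x)`. -/
noncomputable def Zhat (PX : Measure ℝ) (S T : ℝ) : ℝ :=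
  ∫ x, Real.exp (-(x - T) ^ 2 / (2 * S)) ∂PX

/-- The input mean function `f_a(Σ,T)`. -/
noncomputable def fa (PX : Measure ℝ) (S T : ℝ) : ℝ :=
  (∫ x, x * Real.exp (-(x - T) ^ 2 / (2 * S)) ∂PX) / Zhat PX S T

/-- The input variance function `f_c(Σ,T)`. -/
noncomputable def fc (PX : Measure ℝ) (S T : ℝ) : ℝ :=
  (∫ x, x ^ 2 * Real.exp (-(x - T) ^ 2 / (2 * S)) ∂PX) / Zhat PX S T - (fa PX S T) ^ 2

/-
Under the tilted law `dP_tilted ∝ e^{-(x-T)²/(2Σ)} dP_X`, differentiating under the integral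
sign gives `2Σ² ∂_Σ log Ẑ = E_tilted[(x - T)²]`; domination near `Σ` comes from
`y² e^{-y²/(2Σ)} ≤ 2Σ`. This second moment about `T` is the tilted variance `f_c` plus the
squared bias `(f_a - T)²`.
-/

noncomputable def gaussTilt (S T x : ℝ) : ℝ :=
  Real.exp (-(x - T) ^ 2 / (2 * S))

lemma Zhat_eq_integral_gaussTilt (μ : Measure ℝ) (S T : ℝ) :
    Zhat μ S T = ∫ x, gaussTilt S T x ∂μ := rfl

lemma fa_eq_integral_gaussTilt (μ : Measure ℝ) (S T : ℝ) :
    fa μ S T = (∫ x, x * gaussTilt S T x ∂μ) / Zhat μ S T := rfl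

lemma fc_eq_integral_gaussTilt (μ : Measure ℝ) (S T : ℝ) :
    fc μ S T = (∫ x, x ^ 2 * gaussTilt S T x ∂μ) / Zhat μ S T - fa μ S T ^ 2 := rfl

lemma gaussTilt_pos (S T x : ℝ) : 0 < gaussTilt S T x :=
  Real.exp_pos _

lemma gaussTilt_le_one {S : ℝ} (hS : 0 ≤ S) (T x : ℝ) : gaussTilt S T x ≤ 1 :=
  Real.exp_le_one_iff.2 <|
    div_nonpos_of_nonpos_of_nonneg (neg_nonpos.2 (sq_nonneg _)) (by positivity)

@[fun_prop]
lemma continuous_gaussTilt (S T : ℝ) : Continuous (gaussTilt S T) := by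
  unfold gaussTilt
  fun_prop

lemma sub_sq_mul_gaussTilt_le {S : ℝ} (hS : 0 < S) (T x : ℝ) :
    (x - T) ^ 2 * gaussTilt S T x ≤ 2 * S := by
  set u := (x - T) ^ 2 / (2 * S)
  have hsq : (x - T) ^ 2 = 2 * S * u := by simp only [u]; field_simp
  have hu : u * Real.exp (-u) ≤ 1 :=
    (Real.mul_exp_neg_le_exp_neg_one u).trans (Real.exp_le_one_iff.2 (by norm_num))
  calc (x - T) ^ 2 * gaussTilt S T x = 2 * S * (u * Real.exp (-u)) := by
        rw [gaussTilt, neg_div]; nth_rewrite 1 [hsq]; ring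
    _ ≤ 2 * S := mul_le_of_le_one_right (by positivity) hu

lemma abs_mul_gaussTilt_le {S : ℝ} (hS : 0 < S) (T x : ℝ) :
    |x * gaussTilt S T x| ≤ 1 + 2 * S + |T| := by
  have hw := gaussTilt_pos S T x
  have hw1 := gaussTilt_le_one hS.le T x
  have hsq := sub_sq_mul_gaussTilt_le hS T x
  have hxT : |x - T| ≤ 1 + (x - T) ^ 2 := by nlinarith [sq_abs (x - T), abs_nonneg (x - T)]
  rw [abs_mul, abs_of_pos hw]
  calc |x| * gaussTilt S T x ≤ (1 + (x - T) ^ 2 + |T|) * gaussTilt S T x := by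
        gcongr
        linarith [abs_sub_abs_le_abs_sub x T]
    _ ≤ 1 + 2 * S + |T| := by nlinarith [abs_nonneg T]

lemma sq_mul_gaussTilt_le {S : ℝ} (hS : 0 < S) (T x : ℝ) :
    x ^ 2 * gaussTilt S T x ≤ 4 * S + 2 * T ^ 2 := by
  have hw := gaussTilt_pos S T x
  have hw1 := gaussTilt_le_one hS.le T x
  have hsq := sub_sq_mul_gaussTilt_le hS T x
  nlinarith [sq_nonneg (x - 2 * T)]

section Integrability

variable (μ : Measure ℝ) [IsFiniteMeasure μ] {S : ℝ} (T : ℝ)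

lemma integrable_gaussTilt (hS : 0 ≤ S) : Integrable (gaussTilt S T) μ :=
  .of_bound (continuous_gaussTilt S T).aestronglyMeasurable 1 <| .of_forall fun x => by
    rw [Real.norm_of_nonneg (gaussTilt_pos S T x).le]
    exact gaussTilt_le_one hS T x

lemma integrable_mul_gaussTilt (hS : 0 < S) : Integrable (fun x => x * gaussTilt S T x) μ :=
  .of_bound (by fun_prop) _ <| .of_forall (abs_mul_gaussTilt_le hS T)

lemma integrable_sq_mul_gaussTilt (hS : 0 < S) :
    Integrable (fun x => x ^ 2 * gaussTilt S T x) μ :=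
  .of_bound (by fun_prop) _ <| .of_forall fun x => by
    rw [Real.norm_of_nonneg (by have := gaussTilt_pos S T x; positivity)]
    exact sq_mul_gaussTilt_le hS T x

end Integrability

lemma hasDerivAt_gaussTilt (T x : ℝ) {S : ℝ} (hS : S ≠ 0) :
    HasDerivAt (fun s => gaussTilt s T x) ((x - T) ^ 2 * gaussTilt S T x / (2 * S ^ 2)) S := by
  have hinv := ((hasDerivAt_inv hS).const_mul (-(x - T) ^ 2 / 2)).exp
  convert hinv using 1
  · ext s
    rw [gaussTilt]
    field_simp
  · rw [gaussTilt]
    field_simp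

lemma hasDerivAt_Zhat (μ : Measure ℝ) [IsFiniteMeasure μ] {S : ℝ} (hS : 0 < S) (T : ℝ) :
    HasDerivAt (fun s => Zhat μ s T)
      ((∫ x, (x - T) ^ 2 * gaussTilt S T x ∂μ) / (2 * S ^ 2)) S := by
  have hnhds : Set.Ioi (S / 2) ∈ nhds S := Ioi_mem_nhds (by linarith)
  have hbound : ∀ x, ∀ s ∈ Set.Ioi (S / 2),
      ‖(x - T) ^ 2 * gaussTilt s T x / (2 * s ^ 2)‖ ≤ 2 / S := by
    intro x s (hs : S / 2 < s)
    have hs0 : 0 < s := by linarith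
    have hw := gaussTilt_pos s T x
    rw [Real.norm_of_nonneg (by positivity), div_le_div_iff₀ (by positivity) hS]
    nlinarith [sub_sq_mul_gaussTilt_le hs0 T x]
  rw [← integral_div]
  exact (hasDerivAt_integral_of_dominated_loc_of_deriv_le hnhds
    (.of_forall fun s => (continuous_gaussTilt s T).aestronglyMeasurable)
    (integrable_gaussTilt μ T hS.le) (by fun_prop) (.of_forall hbound) (integrable_const _)
    (.of_forall fun x s (hs : S / 2 < s) => hasDerivAt_gaussTilt T x (by linarith))).2

lemma Zhat_pos (μ : Measure ℝ) [IsFiniteMeasure μ] [NeZero μ] {S : ℝ} (hS : 0 ≤ S)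
    (T : ℝ) :
    0 < Zhat μ S T :=
  integral_exp_pos (integrable_gaussTilt μ T hS)

lemma integral_sub_sq_mul_gaussTilt (μ : Measure ℝ) [IsFiniteMeasure μ] {S : ℝ} (hS : 0 < S)
    (T : ℝ) :
    ∫ x, (x - T) ^ 2 * gaussTilt S T x ∂μ =
      (∫ x, x ^ 2 * gaussTilt S T x ∂μ) - 2 * T * (∫ x, x * gaussTilt S T x ∂μ) +
        T ^ 2 * Zhat μ S T := by
  have h2 := integrable_sq_mul_gaussTilt μ T hS
  have h1 := (integrable_mul_gaussTilt μ T hS).const_mul (2 * T)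
  have h0 := (integrable_gaussTilt μ T hS.le).const_mul (T ^ 2)
  have h21 : Integrable (fun x => x ^ 2 * gaussTilt S T x - 2 * T * (x * gaussTilt S T x)) μ :=
    h2.sub h1
  have hexpand : (fun x => (x - T) ^ 2 * gaussTilt S T x) = fun x =>
      x ^ 2 * gaussTilt S T x - 2 * T * (x * gaussTilt S T x) + T ^ 2 * gaussTilt S T x := by
    ext x
    ring
  rw [hexpand, integral_add h21 h0, integral_sub h2 h1, integral_const_mul,
    integral_const_mul, Zhat_eq_integral_gaussTilt]

lemma fc_add_sq_fa_sub (μ : Measure ℝ) [IsFiniteMeasure μ] [NeZero μ] {S : ℝ} (hS : 0 < S)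
    (T : ℝ) :
    fc μ S T + (fa μ S T - T) ^ 2 =
      (∫ x, (x - T) ^ 2 * gaussTilt S T x ∂μ) / Zhat μ S T := by
  have hZ := (Zhat_pos μ hS.le T).ne'
  rw [integral_sub_sq_mul_gaussTilt μ hS T, fc_eq_integral_gaussTilt, fa_eq_integral_gaussTilt]
  field_simp
  ring

/-- The `Σ`-derivative of the log tilted partition function:
`2Σ² ∂_Σ log Ẑ(Σ,T) = f_c(Σ,T) + (f_a(Σ,T) − T)²`. -/
theorem two_S_sq_deriv_log_Zhat (PX : Measure ℝ) [IsProbabilityMeasure PX]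
    (S : ℝ) (hS : 0 < S) (T : ℝ) :
    DifferentiableAt ℝ (fun s => Real.log (Zhat PX s T)) S ∧
      2 * S ^ 2 * deriv (fun s => Real.log (Zhat PX s T)) S =
        fc PX S T + (fa PX S T - T) ^ 2 := by
  have hZ := (Zhat_pos PX hS.le T).ne'
  have hlog := (hasDerivAt_Zhat PX hS T).log hZ
  refine ⟨hlog.differentiableAt, ?_⟩
  rw [hlog.deriv, fc_add_sq_fa_sub PX hS T]
  field_simp
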